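/- Quantitative sectorial lower bound: let φ ∈ (0,π), α ≥ 2, a > 0, and λ ∈ ℂ nonzero with |arg λ| ≤ φ. Then |λ² + α√a λ + a| ≥ sin²(π-φ) · max(|λ|², √a |λ|, a). -/

import Mathlib

/-!
Since `α ≥ 2`, the polynomial `λ² + α√a λ + a` has two real roots `-c₁, -c₂ ≤ 0` with
`c₁ c₂ = a`, so it factors as `(λ + c₁)(λ + c₂)`. For `c ≥ 0` and `λ` in the sector
`|arg λ| ≤ φ`, the angle at `0` of the triangle `-c, 0, λ` is at least `π - φ`, whence
`|λ + c| ≥ sin φ · max(|λ|, c)`. Multiplying the two bounds, it remains to note that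
`max(|λ|, c₁) max(|λ|, c₂)` dominates `|λ|²`, `c₁ c₂ = a`, and hence the geometric mean `√a |λ|`.
-/

open Complex

lemma norm_mul_cos_le_re_of_abs_arg_le {φ : ℝ} (hφ : φ ≤ Real.pi) {z : ℂ} (harg : |z.arg| ≤ φ) :
    ‖z‖ * Real.cos φ ≤ z.re := by
  rw [← norm_mul_cos_arg, ← Real.cos_abs z.arg]
  exact mul_le_mul_of_nonneg_left
    (Real.cos_le_cos_of_nonneg_of_le_pi (abs_nonneg _) hφ harg) (norm_nonneg z)

lemma sq_norm_add_ofReal (z : ℂ) (c : ℝ) : ‖z + c‖ ^ 2 = ‖z‖ ^ 2 + 2 * c * z.re + c ^ 2 := by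
  simp only [Complex.sq_norm, normSq_apply, add_re, ofReal_re, add_im, ofReal_im, add_zero]
  ring

-- The right side equals `(y + x cos θ)² + (x sin θ)²`, and symmetrically in `x, y`.
lemma sq_sin_mul_max_le (θ x y : ℝ) :
    (Real.sin θ * max x y) ^ 2 ≤ x ^ 2 + 2 * x * y * Real.cos θ + y ^ 2 := by
  have hpyth := Real.sin_sq_add_cos_sq θ
  rcases le_total x y with h | h
  · rw [max_eq_right h]
    nlinarith [sq_nonneg (x + y * Real.cos θ)]
  · rw [max_eq_left h]
    nlinarith [sq_nonneg (y + x * Real.cos θ)]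

lemma sin_mul_max_le_norm_add_ofReal {φ : ℝ} (hφ : φ ≤ Real.pi) {c : ℝ} (hc : 0 ≤ c) {z : ℂ}
    (harg : |z.arg| ≤ φ) : Real.sin φ * max ‖z‖ c ≤ ‖z + c‖ := by
  have hsin : 0 ≤ Real.sin φ :=
    Real.sin_nonneg_of_nonneg_of_le_pi ((abs_nonneg _).trans harg) hφ
  rw [← pow_le_pow_iff_left₀ (by positivity) (norm_nonneg _) two_ne_zero, sq_norm_add_ofReal]
  calc (Real.sin φ * max ‖z‖ c) ^ 2
      ≤ ‖z‖ ^ 2 + 2 * ‖z‖ * c * Real.cos φ + c ^ 2 := sq_sin_mul_max_le φ ‖z‖ c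
    _ ≤ ‖z‖ ^ 2 + 2 * c * z.re + c ^ 2 := by
      nlinarith [mul_le_mul_of_nonneg_left (norm_mul_cos_le_re_of_abs_arg_le hφ harg) hc]

lemma exists_nonneg_add_eq_mul_eq {p q : ℝ} (hp : 0 ≤ p) (hq : 0 ≤ q) (hdisc : 4 * q ≤ p ^ 2) :
    ∃ c₁ c₂ : ℝ, 0 ≤ c₁ ∧ 0 ≤ c₂ ∧ c₁ + c₂ = p ∧ c₁ * c₂ = q := by
  set d := Real.sqrt (p ^ 2 - 4 * q)
  have hd : d ^ 2 = p ^ 2 - 4 * q := Real.sq_sqrt (by linarith)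
  have hdp : d ≤ p := Real.sqrt_le_iff.mpr ⟨hp, by linarith⟩
  exact ⟨(p + d) / 2, (p - d) / 2, by positivity, by linarith, by ring, by linear_combination hd / (-4)⟩

lemma max_max_sq_mul_sq_le_max_mul_max {r s c₁ c₂ : ℝ} (hr : 0 ≤ r) (hs : 0 ≤ s)
    (hc₁ : 0 ≤ c₁) (hc₂ : 0 ≤ c₂) (hc : c₁ * c₂ = s ^ 2) :
    max (max (r ^ 2) (s * r)) (s ^ 2) ≤ max r c₁ * max r c₂ := by
  have hr2 : r ^ 2 ≤ max r c₁ * max r c₂ :=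
    (sq r).trans_le (mul_le_mul (le_max_left _ _) (le_max_left _ _) hr (hr.trans (le_max_left _ _)))
  have hs2 : s ^ 2 ≤ max r c₁ * max r c₂ :=
    hc ▸ mul_le_mul (le_max_right _ _) (le_max_right _ _) hc₂ (hc₁.trans (le_max_right _ _))
  -- `s r` is the geometric mean of `r²` and `s²`
  have hsr : s * r ≤ max (r ^ 2) (s ^ 2) := by
    rcases le_total r s with h | h
    · exact (mul_le_mul_of_nonneg_left h hs).trans (le_of_eq_of_le (sq s).symm (le_max_right _ _))
    · exact (mul_le_mul_of_nonneg_right h hr).trans (le_of_eq_of_le (sq r).symm (le_max_left _ _))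
  exact max_le (max_le hr2 (hsr.trans (max_le hr2 hs2))) hs2

theorem quadratic_sector_lower_bound_general
    (φ α a : ℝ) (hφ : φ ∈ Set.Ioo (0 : ℝ) Real.pi) (hα : 2 ≤ α) (ha : 0 < a)
    (lam : ℂ) (harg : |lam.arg| ≤ φ) :
    Real.sin (Real.pi - φ) ^ 2
        * max (max (‖lam‖ ^ 2) (Real.sqrt a * ‖lam‖)) a
      ≤ ‖lam ^ 2 + (α * Real.sqrt a : ℝ) * lam + (a : ℂ)‖ := by
  set s := Real.sqrt a
  have hs : 0 ≤ s := Real.sqrt_nonneg a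
  have hsa : s ^ 2 = a := Real.sq_sqrt ha.le
  obtain ⟨c₁, c₂, hc₁, hc₂, hsum, hprod⟩ :=
    exists_nonneg_add_eq_mul_eq (p := α * s) (q := a) (by positivity) ha.le
      (by rw [← hsa, mul_pow]; gcongr; nlinarith)
  have hfactor : lam ^ 2 + (α * s : ℝ) * lam + (a : ℂ) = (lam + c₁) * (lam + c₂) := by
    rw [← hsum, ← hprod]
    push_cast
    ring
  rw [hfactor, norm_mul, Real.sin_pi_sub, ← hsa]
  calc Real.sin φ ^ 2 * max (max (‖lam‖ ^ 2) (s * ‖lam‖)) (s ^ 2)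
      ≤ Real.sin φ ^ 2 * (max ‖lam‖ c₁ * max ‖lam‖ c₂) := by
        gcongr
        exact max_max_sq_mul_sq_le_max_mul_max (norm_nonneg _) hs hc₁ hc₂ (hprod.trans hsa.symm)
    _ = (Real.sin φ * max ‖lam‖ c₁) * (Real.sin φ * max ‖lam‖ c₂) := by ring
    _ ≤ ‖lam + c₁‖ * ‖lam + c₂‖ := by
      have hsin : 0 ≤ Real.sin φ := Real.sin_nonneg_of_nonneg_of_le_pi hφ.1.le hφ.2.le
      exact mul_le_mul (sin_mul_max_le_norm_add_ofReal hφ.2.le hc₁ harg)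
        (sin_mul_max_le_norm_add_ofReal hφ.2.le hc₂ harg) (by positivity) (norm_nonneg _)

/-- Quantitative sectorial lower bound: for `φ ∈ (0,π)`, `α ≥ 2`, `a > 0` and
nonzero `λ` with `|arg λ| ≤ φ`, one has
`|λ² + α√a λ + a| ≥ sin²(π-φ) · max(|λ|², √a |λ|, a)`. -/
theorem quadratic_sector_lower_bound
    (φ α a : ℝ) (hφ : φ ∈ Set.Ioo (0 : ℝ) Real.pi) (hα : 2 ≤ α) (ha : 0 < a)
    (lam : ℂ) (hlam : lam ≠ 0) (harg : |lam.arg| ≤ φ) :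
    Real.sin (Real.pi - φ) ^ 2
        * max (max (‖lam‖ ^ 2) (Real.sqrt a * ‖lam‖)) a
      ≤ ‖lam ^ 2 + (α * Real.sqrt a : ℝ) * lam + (a : ℂ)‖ :=
  quadratic_sector_lower_bound_general φ α a hφ hα ha lam harg
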